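/- In intuitionistic linear logic, for formulas d, e and a classical constraint d being duplicable (d ⊢ d ⊗ d and d ⊗ d ⊢ d), the formula ∀x̄(d ⊸ (e ⊗ ⊤)) ⊗ ⊤ is logically equivalent to ∀x̄(d ⊸ (d ⊗ e ⊗ ⊤)) ⊗ ⊤, where x̄ are variables not free in d. -/
import Mathlib


/-- Formulas of first-order intuitionistic linear logic, with de Bruijn
indices for variables (terms are variables). -/
inductive Fm : Type
  | atom : ℕ → List ℕ → Fm
  | one : Fm
  | top : Fm
  | tensor : Fm → Fm → Fm
  | limp : Fm → Fm → Fm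
  | with_ : Fm → Fm → Fm
  | bang : Fm → Fm
  | ex : Fm → Fm
  | all : Fm → Fm

namespace Fm

/-- Push a renaming of free variables under a binder. -/
def under (f : ℕ → ℕ) : ℕ → ℕ
  | 0 => 0
  | n + 1 => f n + 1

/-- Renaming the free variables of a formula. -/
def ren (f : ℕ → ℕ) : Fm → Fm
  | atom p args => atom p (args.map f)
  | one => one
  | top => top
  | tensor A B => tensor (ren f A) (ren f B)
  | limp A B => limp (ren f A) (ren f B)
  | with_ A B => with_ (ren f A) (ren f B)
  | bang A => bang (ren f A)
  | ex A => ex (ren (under f) A)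
  | all A => all (ren (under f) A)

/-- Lifting: shift all free variables by one (to go under a binder). -/
def lift (A : Fm) : Fm := ren Nat.succ A

/-- `substAt k t A` substitutes the variable `t` for the de Bruijn index `k`
in `A`, lowering the indices above `k`. -/
def substAt (k t : ℕ) : Fm → Fm
  | atom p args => atom p (args.map fun n => if n = k then t else if k < n then n - 1 else n)
  | one => one
  | top => top
  | tensor A B => tensor (substAt k t A) (substAt k t B)
  | limp A B => limp (substAt k t A) (substAt k t B)
  | with_ A B => with_ (substAt k t A) (substAt k t B)
  | bang A => bang (substAt k t A)
  | ex A => ex (substAt (k + 1) (t + 1) A)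
  | all A => all (substAt (k + 1) (t + 1) A)

/-- Substitution of a variable for the de Bruijn index `0`. -/
def subst (t : ℕ) (A : Fm) : Fm := substAt 0 t A

end Fm

open Fm

/-- Sequent calculus for first-order intuitionistic linear logic:
`Der Γ A` means `Γ ⊢ A`. -/
inductive Der : List Fm → Fm → Prop
  | id (A) : Der [A] A
  | exch {Γ Δ A} (h : Γ.Perm Δ) : Der Γ A → Der Δ A
  | cut {Γ Δ A C} : Der Γ A → Der (A :: Δ) C → Der (Γ ++ Δ) C
  | one_r : Der [] one
  | one_l {Γ A} : Der Γ A → Der (one :: Γ) A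
  | top_r (Γ) : Der Γ top
  | tensor_r {Γ Δ A B} : Der Γ A → Der Δ B → Der (Γ ++ Δ) (tensor A B)
  | tensor_l {Γ A B C} : Der (A :: B :: Γ) C → Der (tensor A B :: Γ) C
  | limp_r {Γ A B} : Der (A :: Γ) B → Der Γ (limp A B)
  | limp_l {Γ Δ A B C} : Der Γ A → Der (B :: Δ) C → Der (limp A B :: (Γ ++ Δ)) C
  | with_r {Γ A B} : Der Γ A → Der Γ B → Der Γ (with_ A B)
  | with_l1 {Γ A B C} : Der (A :: Γ) C → Der (with_ A B :: Γ) C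
  | with_l2 {Γ A B C} : Der (B :: Γ) C → Der (with_ A B :: Γ) C
  | bang_l {Γ A C} : Der (A :: Γ) C → Der (bang A :: Γ) C
  | bang_w {Γ A C} : Der Γ C → Der (bang A :: Γ) C
  | bang_c {Γ A C} : Der (bang A :: bang A :: Γ) C → Der (bang A :: Γ) C
  | bang_r {Γ : List Fm} {A} : Der (Γ.map bang) A → Der (Γ.map bang) (bang A)
  | ex_r {Γ A} (t : ℕ) : Der Γ (subst t A) → Der Γ (ex A)
  | ex_l {Γ A C} : Der (A :: Γ.map lift) (lift C) → Der (ex A :: Γ) C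
  | all_r {Γ : List Fm} {A} : Der (Γ.map lift) A → Der Γ (all A)
  | all_l {Γ A C} (t : ℕ) : Der (subst t A :: Γ) C → Der (all A :: Γ) C

/-- Entailment between single formulas. -/
def Entails (A B : Fm) : Prop := Der [A] B

/-- Logical equivalence: mutual derivability. -/
def LEquiv (A B : Fm) : Prop := Entails A B ∧ Entails B A

namespace Fm

lemma under_comp (f g : ℕ → ℕ) : under (f ∘ g) = under f ∘ under g := by
  funext n; cases n <;> simp [under, Function.comp]

lemma ren_comp (f g : ℕ → ℕ) (A : Fm) : ren f (ren g A) = ren (f ∘ g) A := by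
  induction A generalizing f g <;> simp [ren, List.map_map, under_comp, *]

lemma under_id : under id = id := by
  funext n; cases n <;> simp [under]

lemma ren_id (A : Fm) : ren id A = A := by
  induction A <;> simp [ren, under_id, *]

/-- Substitution of a variable is a renaming. -/
def sigma (k t : ℕ) (n : ℕ) : ℕ := if n = k then t else if k < n then n - 1 else n

lemma under_sigma (k t : ℕ) : under (sigma k t) = sigma (k+1) (t+1) := by
  funext n
  cases n with
  | zero => simp [under, sigma]
  | succ m =>
      simp only [under, sigma]
      split_ifs <;> omega

lemma substAt_eq_ren (k t : ℕ) (A : Fm) : substAt k t A = ren (sigma k t) A := by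
  induction A generalizing k t <;>
    first
      | rfl
      | simp [substAt, ren, under_sigma, *]

lemma ren_under_lift (f : ℕ → ℕ) (A : Fm) :
    ren (under f) (lift A) = lift (ren f A) := by
  have h : (under f ∘ Nat.succ) = (Nat.succ ∘ f) := by funext n; rfl
  simp only [lift, ren_comp, h]

lemma ren_subst (f : ℕ → ℕ) (t : ℕ) (A : Fm) :
    ren f (subst t A) = subst (f t) (ren (under f) A) := by
  simp only [subst, substAt_eq_ren, ren_comp]
  congr 1
  funext n
  cases n <;> simp [sigma, under, Function.comp]

lemma subst0_under_succ (A : Fm) : subst 0 (ren (under Nat.succ) A) = A := by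
  rw [subst, substAt_eq_ren, ren_comp]
  have h : sigma 0 0 ∘ under Nat.succ = id := by
    funext n
    cases n <;> simp [sigma, under, Function.comp]
  rw [h, ren_id]

end Fm

open Fm in
lemma ren_der (f : ℕ → ℕ) {Γ : List Fm} {A : Fm} (h : Der Γ A) :
    Der (Γ.map (ren f)) (ren f A) := by
  induction h generalizing f with
  | id A => simpa using Der.id (ren f A)
  | exch hp _ ih => exact Der.exch (hp.map _) (ih f)
  | cut _ _ ih1 ih2 =>
      rw [List.map_append]
      exact Der.cut (ih1 f) (ih2 f)
  | one_r => exact Der.one_r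
  | one_l _ ih => exact Der.one_l (ih f)
  | top_r Γ => exact Der.top_r _
  | tensor_r _ _ ih1 ih2 =>
      rw [List.map_append]
      exact Der.tensor_r (ih1 f) (ih2 f)
  | tensor_l _ ih => exact Der.tensor_l (ih f)
  | limp_r _ ih => exact Der.limp_r (ih f)
  | limp_l _ _ ih1 ih2 =>
      rw [List.map_cons, List.map_append]
      exact Der.limp_l (ih1 f) (ih2 f)
  | with_r _ _ ih1 ih2 => exact Der.with_r (ih1 f) (ih2 f)
  | with_l1 _ ih => exact Der.with_l1 (ih f)
  | with_l2 _ ih => exact Der.with_l2 (ih f)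
  | bang_l _ ih => exact Der.bang_l (ih f)
  | bang_w _ ih => exact Der.bang_w (ih f)
  | bang_c _ ih => exact Der.bang_c (ih f)
  | bang_r _ ih =>
      have hc : ∀ (Δ : List Fm), (Δ.map bang).map (ren f) = (Δ.map (ren f)).map bang := by
        intro Δ
        simp only [List.map_map]
        exact List.map_congr_left fun a _ => rfl
      rw [hc]
      exact Der.bang_r (by rw [← hc]; exact ih f)
  | ex_r t _ ih =>
      apply Der.ex_r (f t)
      rw [← ren_subst]
      exact ih f
  | ex_l _ ih =>
      apply Der.ex_l
      have hfun : (ren (under f) ∘ lift) = (lift ∘ ren f) := by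
        funext B; exact ren_under_lift f B
      have h1 := ih (under f)
      simp only [List.map_cons, List.map_map, hfun, ren_under_lift] at h1 ⊢
      exact h1
  | all_r _ ih =>
      apply Der.all_r
      have hfun : (ren (under f) ∘ lift) = (lift ∘ ren f) := by
        funext B; exact ren_under_lift f B
      have h1 := ih (under f)
      simp only [List.map_map, hfun] at h1 ⊢
      exact h1
  | all_l t _ ih =>
      apply Der.all_l (f t)
      have := ih f
      rw [List.map_cons, ren_subst] at this
      exact this

open Fm in
lemma all_mono {A B : Fm} (h : Der [A] B) : Der [Fm.all A] (Fm.all B) := by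
  apply Der.all_r
  show Der [Fm.all (ren (under Nat.succ) A)] B
  apply Der.all_l 0
  rw [subst0_under_succ]
  exact h

open Fm in
/-- for a duplicable classical constraint `d` (with the bound
variables `x̄` not free in `d`, expressed by lifting `d` under the binder),
`∀x̄(d ⊸ (e ⊗ ⊤)) ⊗ ⊤ ⊣⊢ ∀x̄(d ⊸ (d ⊗ e ⊗ ⊤)) ⊗ ⊤`. -/

theorem law23_logical (d e : Fm)
    (hdup : LEquiv d (tensor d d)) :
    LEquiv (tensor (all (limp (lift d) (tensor e top))) top)
      (tensor (all (limp (lift d) (tensor (lift d) (tensor e top)))) top) := by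
  set d' := lift d with hd'
  set X := tensor e top with hX
  have dup : Der [d'] (tensor d' d') := ren_der Nat.succ hdup.1
  constructor
  · apply Der.tensor_l
    have core : Der [limp d' X] (limp d' (tensor d' X)) := by
      apply Der.limp_r
      have step : Der (tensor d' d' :: [limp d' X]) (tensor d' X) := by
        apply Der.tensor_l
        have inner : Der [X, d'] (tensor d' X) :=
          Der.exch (List.Perm.swap _ _ _) (Der.tensor_r (Der.id d') (Der.id X))
        have base : Der [limp d' X, d', d'] (tensor d' X) :=
          Der.limp_l (Der.id d') inner
        exact Der.exch
          ((List.Perm.swap _ _ _).trans ((List.Perm.swap _ _ _).cons _)) base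
      exact Der.cut dup step
    exact Der.tensor_r (all_mono core) (Der.top_r [top])
  · apply Der.tensor_l
    have core : Der [limp d' (tensor d' X)] (limp d' X) := by
      apply Der.limp_r
      refine Der.exch (List.Perm.swap _ _ _) ?_
      refine Der.limp_l (Der.id d') ?_
      apply Der.tensor_l
      refine Der.exch (List.Perm.swap _ _ _) ?_
      apply Der.tensor_l
      exact Der.tensor_r (Der.id e) (Der.top_r [top, d'])
    exact Der.tensor_r (all_mono core) (Der.top_r [top])
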